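/- Let M be a right R-module and N a nonsingular right R-module. If M ⊕ N is a SIP-CS module, then for every homomorphism f: M → N, the kernel Ker(f) is a direct summand of M. -/

import Mathlib

universe u v w

section Defs

variable {S : Type u} [Ring S]

/-- A submodule `A` is a direct summand of `M`. -/
def IsDirectSummand {M : Type v} [AddCommGroup M] [Module S M] (A : Submodule S M) : Prop :=
  ∃ B : Submodule S M, A ⊓ B = ⊥ ∧ A ⊔ B = ⊤

/-- `A` is an essential submodule of `B`. -/
def IsEssentialIn {M : Type v} [AddCommGroup M] [Module S M] (A B : Submodule S M) : Prop :=
  A ≤ B ∧ ∀ K : Submodule S M, K ≤ B → K ≠ ⊥ → A ⊓ K ≠ ⊥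

/-- `A` is essential in some direct summand of `M`. -/
def EssentialInSummand {M : Type v} [AddCommGroup M] [Module S M] (A : Submodule S M) : Prop :=
  ∃ D : Submodule S M, IsDirectSummand D ∧ IsEssentialIn A D

/-- `A` is a small (superfluous) submodule of `M`. -/
def IsSmallSubmodule {M : Type v} [AddCommGroup M] [Module S M] (A : Submodule S M) : Prop :=
  ∀ K : Submodule S M, A ⊔ K = ⊤ → K = ⊤

/-- `A` lies above the direct summand `D` of `M`, i.e. `D ≤ A` and `A/D` is small in `M/D`. -/
def LiesAbove {M : Type v} [AddCommGroup M] [Module S M] (A D : Submodule S M) : Prop :=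
  IsDirectSummand D ∧ D ≤ A ∧ IsSmallSubmodule (Submodule.map D.mkQ A)

/-- `A` lies above some direct summand of `M`. -/
def LiesAboveSummand {M : Type v} [AddCommGroup M] [Module S M] (A : Submodule S M) : Prop :=
  ∃ D : Submodule S M, LiesAbove A D

end Defs

section ModDefs

variable (S : Type u) [Ring S]

/-- SSP: the sum of any two direct summands is a direct summand. -/
def HasSSP (M : Type v) [AddCommGroup M] [Module S M] : Prop :=
  ∀ A B : Submodule S M, IsDirectSummand A → IsDirectSummand B → IsDirectSummand (A ⊔ B)

/-- SIP: the intersection of any two direct summands is a direct summand. -/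
def HasSIP (M : Type v) [AddCommGroup M] [Module S M] : Prop :=
  ∀ A B : Submodule S M, IsDirectSummand A → IsDirectSummand B → IsDirectSummand (A ⊓ B)

/-- SIP-CS: the intersection of any finite family of direct summands is essential in a
direct summand. -/
def IsSIPCS (M : Type v) [AddCommGroup M] [Module S M] : Prop :=
  ∀ (ι : Type) [Fintype ι] (A : ι → Submodule S M),
    (∀ i, IsDirectSummand (A i)) → EssentialInSummand (⨅ i, A i)

/-- SSP-lifting: if each member of a finite family of submodules lies above a direct summand,
then their sum lies above a direct summand. -/
def IsSSPLifting (M : Type v) [AddCommGroup M] [Module S M] : Prop :=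
  ∀ (ι : Type) [Fintype ι] (A : ι → Submodule S M),
    (∀ i, LiesAboveSummand (A i)) → LiesAboveSummand (⨆ i, A i)

/-- C2 condition: every submodule isomorphic to a direct summand is a direct summand. -/
def HasC2 (M : Type v) [AddCommGroup M] [Module S M] : Prop :=
  ∀ A B : Submodule S M, IsDirectSummand B → Nonempty (A ≃ₗ[S] B) → IsDirectSummand A

/-- C3 condition: the sum of two direct summands with zero intersection is a direct summand. -/
def HasC3 (M : Type v) [AddCommGroup M] [Module S M] : Prop :=
  ∀ A B : Submodule S M, IsDirectSummand A → IsDirectSummand B → A ⊓ B = ⊥ →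
    IsDirectSummand (A ⊔ B)

/-- D2 condition: if `M/A` is isomorphic to a direct summand of `M` then `A` is a direct
summand. -/
def HasD2 (M : Type v) [AddCommGroup M] [Module S M] : Prop :=
  ∀ A : Submodule S M, (∃ B : Submodule S M, IsDirectSummand B ∧
    Nonempty ((M ⧸ A) ≃ₗ[S] B)) → IsDirectSummand A

/-- D3 condition: if two direct summands sum to `M`, their intersection is a direct summand. -/
def IsD3Module (M : Type v) [AddCommGroup M] [Module S M] : Prop :=
  ∀ A B : Submodule S M, IsDirectSummand A → IsDirectSummand B → A ⊔ B = ⊤ →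
    IsDirectSummand (A ⊓ B)

/-- `M` is relatively CS-Rickart to `N`. -/
def RelCSRickart (M : Type v) (N : Type w) [AddCommGroup M] [Module S M]
    [AddCommGroup N] [Module S N] : Prop :=
  ∀ φ : M →ₗ[S] N, EssentialInSummand (LinearMap.ker φ)

/-- `M` is relatively d-CS-Rickart to `N`. -/
def RelDCSRickart (M : Type v) (N : Type w) [AddCommGroup M] [Module S M]
    [AddCommGroup N] [Module S N] : Prop :=
  ∀ φ : N →ₗ[S] M, LiesAboveSummand (LinearMap.range φ)

/-- CS-Rickart module. -/
def IsCSRickart (M : Type v) [AddCommGroup M] [Module S M] : Prop :=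
  RelCSRickart S M M

/-- d-CS-Rickart module. -/
def IsDCSRickart (M : Type v) [AddCommGroup M] [Module S M] : Prop :=
  RelDCSRickart S M M

/-- `M` has an `Ω`-cover, where `Ω` is the class of modules satisfying `P`. -/
def HasCover (P : ModuleCat.{v} S → Prop) (M : Type v) [AddCommGroup M] [Module S M] : Prop :=
  ∃ (E : ModuleCat.{v} S) (g : E →ₗ[S] M), P E ∧
    (∀ (E' : ModuleCat.{v} S), P E' → ∀ g' : E' →ₗ[S] M,
      ∃ h : E' →ₗ[S] E, g ∘ₗ h = g') ∧
    (∀ h : E →ₗ[S] E, g ∘ₗ h = g → Function.Bijective h)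

/-- `M` has an `Ω`-envelope, where `Ω` is the class of modules satisfying `P`. -/
def HasEnvelope (P : ModuleCat.{v} S → Prop) (M : Type v) [AddCommGroup M] [Module S M] : Prop :=
  ∃ (E : ModuleCat.{v} S) (g : M →ₗ[S] E), P E ∧
    (∀ (E' : ModuleCat.{v} S), P E' → ∀ g' : M →ₗ[S] E',
      ∃ h : E →ₗ[S] E', h ∘ₗ g = g') ∧
    (∀ h : E →ₗ[S] E, h ∘ₗ g = g → Function.Bijective h)

/-- `M` is 2-generated. -/
def TwoGenerated (M : Type v) [AddCommGroup M] [Module S M] : Prop :=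
  ∃ a b : M, Submodule.span S ({a, b} : Set M) = ⊤

/-- `M` is finitely cogenerated. -/
def FinitelyCogenerated (M : Type v) [AddCommGroup M] [Module S M] : Prop :=
  ∀ 𝒜 : Set (Submodule S M), sInf 𝒜 = ⊥ →
    ∃ ℬ ⊆ 𝒜, ℬ.Finite ∧ sInf ℬ = ⊥

/-- The socle of `M`: the sum of all simple submodules. -/
def SocleOf (M : Type v) [AddCommGroup M] [Module S M] : Submodule S M :=
  sSup {A : Submodule S M | IsSimpleModule S ↥A}

/-- An indecomposable module: nonzero, and its only direct summands are `0` and itself. -/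
def IsIndecomposable (M : Type v) [AddCommGroup M] [Module S M] : Prop :=
  (⊤ : Submodule S M) ≠ ⊥ ∧
    ∀ A : Submodule S M, IsDirectSummand A → A = ⊥ ∨ A = ⊤

end ModDefs

section RingDefs

variable (R : Type u) [Ring R]

/-- The right annihilator of an element of a right `R`-module, as a right ideal of `R`. -/
def rightAnnihilator {M : Type v} [AddCommGroup M] [Module Rᵐᵒᵖ M] (m : M) :
    Submodule Rᵐᵒᵖ R where
  carrier := {r : R | MulOpposite.op r • m = 0}
  add_mem' := by
    intro a b ha hb
    simp only [Set.mem_setOf_eq] at *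
    rw [MulOpposite.op_add, add_smul, ha, hb, add_zero]
  zero_mem' := by simp
  smul_mem' := by
    intro c x hx
    simp only [Set.mem_setOf_eq] at *
    have : MulOpposite.op (c • x) = c * MulOpposite.op x := by
      rw [MulOpposite.smul_eq_mul_unop]
      simp [MulOpposite.op_mul]
    rw [this, mul_smul, hx, smul_zero]

/-- `M` is a nonsingular right `R`-module. -/
def IsNonsingular (M : Type v) [AddCommGroup M] [Module Rᵐᵒᵖ M] : Prop :=
  ∀ m : M, IsEssentialIn (rightAnnihilator R m) (⊤ : Submodule Rᵐᵒᵖ R) → m = 0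

/-- `R` is a right V-ring: every simple right `R`-module is injective. -/
def IsRightVRing : Prop :=
  ∀ (N : Type u) [AddCommGroup N] [Module Rᵐᵒᵖ N],
    IsSimpleModule Rᵐᵒᵖ N → Module.Injective Rᵐᵒᵖ N

/-- `R` is semiregular: `R/J(R)` is von Neumann regular and idempotents lift modulo `J(R)`. -/
def IsSemiregularRing : Prop :=
  (∀ a : R, ∃ b : R, a - a * b * a ∈ Ideal.jacobson (⊥ : Ideal R) ∧ b = b * a * b) ∧
  (∀ a : R, a * a - a ∈ Ideal.jacobson (⊥ : Ideal R) →
    ∃ e : R, e * e = e ∧ e - a ∈ Ideal.jacobson (⊥ : Ideal R))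

end RingDefs

/-!
The graph of `f` and `M × 0` are direct summands of `M × N` meeting in `ker f × 0`, so SIP-CS
makes `ker f × 0` essential in a direct summand `D`. For `x ∈ D` the right ideal
`{r | x r ∈ ker f × 0}` is essential (a preimage of an essential submodule), and it annihilates
both `f x.1` and `x.2`, which therefore vanish since `N` is nonsingular. Hence `D = ker f × 0`,
and `ker f` is a direct summand of `M` because `M` is a retract of `M × N`.
-/

open LinearMap Submodule

section Essential

variable {S : Type u} [Ring S] {M : Type v} [AddCommGroup M] [Module S M]

theorem IsEssentialIn.mono_left {A A' B : Submodule S M} (h : IsEssentialIn A B) (hAA' : A ≤ A')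
    (hA'B : A' ≤ B) : IsEssentialIn A' B :=
  ⟨hA'B, fun K hKB hK hA'K => h.2 K hKB hK (eq_bot_mono (inf_le_inf_right K hAA') hA'K)⟩

theorem IsEssentialIn.comap_isEssentialIn_top {P : Type w} [AddCommGroup P] [Module S P]
    {K D : Submodule S M} (h : IsEssentialIn K D) (φ : P →ₗ[S] M) (hφ : range φ ≤ D) :
    IsEssentialIn (K.comap φ) ⊤ := by
  refine ⟨le_top, fun J _ hJ => ?_⟩
  by_cases hJker : J ⊓ ker φ = ⊥
  · have hmap : J.map φ ≠ ⊥ := fun h0 =>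
      hJ (by rwa [inf_eq_left.2 (le_ker_iff_map.2 h0)] at hJker)
    obtain ⟨_, ⟨hzK, y, hyJ, rfl⟩, hz0⟩ :=
      (Submodule.ne_bot_iff _).1 (h.2 (J.map φ) (map_le_range.trans hφ) hmap)
    exact (Submodule.ne_bot_iff _).2 ⟨y, ⟨hzK, hyJ⟩, fun hy => hz0 (by rw [hy, map_zero])⟩
  · refine ne_bot_of_le_ne_bot hJker ?_
    rw [inf_comm]
    exact inf_le_inf_right J (comap_mono bot_le)

end Essential

section Nonsingular

variable (R : Type u) [Ring R] {P : Type v} [AddCommGroup P] [Module Rᵐᵒᵖ P]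

/-- `r ↦ x r`, the right-module analogue of `LinearMap.toSpanSingleton`. -/
def toSpanSingletonOp (x : P) : R →ₗ[Rᵐᵒᵖ] P :=
  toSpanSingleton Rᵐᵒᵖ P x ∘ₗ (MulOpposite.opLinearEquiv Rᵐᵒᵖ).toLinearMap

variable {R}

theorem range_toSpanSingletonOp_le {x : P} {D : Submodule Rᵐᵒᵖ P} (hx : x ∈ D) :
    range (toSpanSingletonOp R x) ≤ D := by
  rintro _ ⟨r, rfl⟩
  exact D.smul_mem _ hx

theorem rightAnnihilator_apply_eq_comap {N : Type w} [AddCommGroup N] [Module Rᵐᵒᵖ N]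
    (g : P →ₗ[Rᵐᵒᵖ] N) (x : P) :
    rightAnnihilator R (g x) = (ker g).comap (toSpanSingletonOp R x) := by
  ext r
  simp [rightAnnihilator, toSpanSingletonOp]

theorem IsNonsingular.le_ker_of_isEssentialIn {N : Type w} [AddCommGroup N] [Module Rᵐᵒᵖ N]
    (hN : IsNonsingular R N) (g : P →ₗ[Rᵐᵒᵖ] N) {K D : Submodule Rᵐᵒᵖ P}
    (hKD : IsEssentialIn K D) (hK : K ≤ ker g) : D ≤ ker g := by
  intro x hx
  apply hN
  rw [rightAnnihilator_apply_eq_comap]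
  exact (hKD.comap_isEssentialIn_top _ (range_toSpanSingletonOp_le hx)).mono_left
    (comap_mono hK) le_top

end Nonsingular

section DirectSummand

variable {S : Type u} [Ring S] {M : Type v} [AddCommGroup M] [Module S M]
  {N : Type w} [AddCommGroup N] [Module S N]

theorem isDirectSummand_iff_exists_isCompl {A : Submodule S M} :
    IsDirectSummand A ↔ ∃ B, IsCompl A B := by
  simp only [IsDirectSummand, isCompl_iff, disjoint_iff, codisjoint_iff]

theorem IsDirectSummand.of_map_of_leftInverse {p : Submodule S M} {i : M →ₗ[S] N}
    {j : N →ₗ[S] M} (hji : j ∘ₗ i = LinearMap.id) (h : IsDirectSummand (p.map i)) :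
    IsDirectSummand p := by
  obtain ⟨B, hB⟩ := isDirectSummand_iff_exists_isCompl.1 h
  have hj : ∀ y ∈ p.map i, j y ∈ p := by
    rintro _ ⟨x, hx, rfl⟩
    simpa [← LinearMap.comp_apply, hji] using hx
  refine isDirectSummand_iff_exists_isCompl.2 ⟨_, isCompl_of_proj
    (f := j.restrict hj ∘ₗ projectionOnto _ B hB ∘ₗ i) fun x => ?_⟩
  ext
  simp [projectionOnto_apply_of_mem_left hB (mem_map_of_mem x.2), ← LinearMap.comp_apply, hji]

theorem LinearMap.isCompl_graph_range_inr (f : M →ₗ[S] N) :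
    IsCompl f.graph (range (inr S M N)) := by
  constructor
  · rw [disjoint_iff_inf_le]
    rintro ⟨m, n⟩ ⟨hg, n', hn'⟩
    rw [inr_apply, Prod.mk.injEq] at hn'
    obtain ⟨rfl, rfl⟩ := hn'
    simpa using hg
  · rw [codisjoint_iff_le_sup]
    rintro ⟨m, n⟩ -
    exact mem_sup.2 ⟨(m, f m), rfl, (0, n - f m), ⟨n - f m, rfl⟩, by simp⟩

theorem LinearMap.graph_inf_range_inl (f : M →ₗ[S] N) :
    f.graph ⊓ range (inl S M N) = (ker f).map (inl S M N) := by
  rw [← ker_snd, map_inl]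
  ext ⟨m, n⟩
  simp only [mem_inf, mem_graph_iff, mem_ker, snd_apply, mem_prod, mem_bot]
  grind

end DirectSummand

theorem IsSIPCS.essentialInSummand_inf {S : Type u} [Ring S] {M : Type v} [AddCommGroup M]
    [Module S M] (h : IsSIPCS S M) {A B : Submodule S M} (hA : IsDirectSummand A)
    (hB : IsDirectSummand B) : EssentialInSummand (A ⊓ B) := by
  simpa [iInf_bool_eq] using h Bool (fun b => cond b A B) (Bool.forall_bool.2 ⟨hB, hA⟩)

/-- if `N` is nonsingular and `M ⊕ N` is SIP-CS, then the kernel of every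
homomorphism `M → N` is a direct summand of `M`. -/
theorem statement_16 (R : Type u) [Ring R] (M N : Type v)
    [AddCommGroup M] [Module Rᵐᵒᵖ M] [AddCommGroup N] [Module Rᵐᵒᵖ N]
    (hN : IsNonsingular R N) (h : IsSIPCS Rᵐᵒᵖ (M × N)) (f : M →ₗ[Rᵐᵒᵖ] N) :
    IsDirectSummand (LinearMap.ker f) := by
  obtain ⟨D, hD, hKD⟩ := h.essentialInSummand_inf
    (isDirectSummand_iff_exists_isCompl.2 ⟨_, f.isCompl_graph_range_inr⟩)
    (isDirectSummand_iff_exists_isCompl.2 ⟨_, isCompl_range_inl_inr⟩)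
  rw [f.graph_inf_range_inl] at hKD
  have hDK : D ≤ (ker f).map (inl _ M N) := by
    intro x hx
    have hx₁ := hN.le_ker_of_isEssentialIn (f ∘ₗ fst _ M N) hKD
      (by rintro _ ⟨m, hm, rfl⟩; simpa using hm) hx
    have hx₂ := hN.le_ker_of_isEssentialIn (snd _ M N) hKD
      (by rintro _ ⟨m, -, rfl⟩; rfl) hx
    exact ⟨x.1, hx₁, Prod.ext rfl hx₂.symm⟩
  exact (le_antisymm hDK hKD.1 ▸ hD).of_map_of_leftInverse (fst_comp_inl _ M N)
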